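/- arXiv:1809.07741 — 3 statements merged into one kernel-verified Lean document; each statement's English description precedes it below -/
import Mathlib

section
/- Grothendieck's compactness criterion: Let X be a Banach space over ℝ or ℂ and K ⊆ X. Then K is relatively compact (i.e., its closure is compact) if and only if there exists a sequence (xₙ)ₙ in X with ‖xₙ‖ → 0 such that K ⊆ { ∑ₙ αₙ xₙ : (αₙ) a scalar sequence with ∑ₙ |αₙ| ≤ 1 } (each such series converges absolutely since (xₙ) is bounded). -/
noncomputable section

open scoped ENNReal NNReal

/-- The conjugate exponent `p'` of `p : ℝ≥0∞`, characterized by `1/p + 1/p' = 1`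
(with the conventions `1' = ∞` and `∞' = 1`). -/
def conjExp (p : ℝ≥0∞) : ℝ≥0∞ := (1 - 1/p)⁻¹

theorem one_le_conjExp (p : ℝ≥0∞) : 1 ≤ conjExp p := by
  rw [conjExp]
  rw [ENNReal.one_le_inv]
  exact tsub_le_self

instance (p : ℝ≥0∞) : Fact (1 ≤ conjExp p) := ⟨one_le_conjExp p⟩

/-- The `ℓ_p`-norm `(∑ₙ ‖y n‖^p)^(1/p)` of a `p`-summable sequence `y`. -/
def lpNorm {X : Type*} [NormedAddCommGroup X] (p : ℝ≥0∞) (y : ℕ → X)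
    (hy : Memℓp y p) : ℝ :=
  ‖(⟨y, hy⟩ : lp (fun _ : ℕ => X) p)‖

/-- The `p`-convex hull of a sequence `x` in `X`, taken with respect to the exponent `q`
(in the applications below, `q` is the conjugate exponent of `p`):
the set of all sums `∑ₙ αₙ • xₙ` with `(αₙ) ∈ ℓ_q`, `‖(αₙ)‖_q ≤ 1`. -/
def pCo (𝕜 : Type*) [RCLike 𝕜] {X : Type*} [NormedAddCommGroup X] [NormedSpace 𝕜 X]
    (q : ℝ≥0∞) (x : ℕ → X) : Set X :=
  {v | ∃ α : lp (fun _ : ℕ => 𝕜) q, ‖α‖ ≤ 1 ∧ HasSum (fun n => α n • x n) v}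

/-- A set `K ⊆ X` is relatively `p`-compact if it is contained in the `p`-convex hull of a
`p`-summable sequence of `X`. -/
def RelPCompact (𝕜 : Type*) [RCLike 𝕜] {X : Type*} [NormedAddCommGroup X]
    [NormedSpace 𝕜 X] (p : ℝ≥0∞) (K : Set X) : Prop :=
  ∃ x : ℕ → X, Memℓp x p ∧ K ⊆ pCo 𝕜 (conjExp p) x

/-- A bounded linear map is `p`-compact if the image of the closed unit ball is contained in
the `p`-convex hull of a `p`-summable sequence of the target space. -/
def IsPCompact (𝕜 : Type*) [RCLike 𝕜] {X Y : Type*}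
    [SeminormedAddCommGroup X] [NormedSpace 𝕜 X]
    [NormedAddCommGroup Y] [NormedSpace 𝕜 Y] (p : ℝ≥0∞) (T : X →L[𝕜] Y) : Prop :=
  ∃ y : ℕ → Y, Memℓp y p ∧ T '' Metric.closedBall 0 1 ⊆ pCo 𝕜 (conjExp p) y

/-- The `p`-compact norm `κ_p(T) = inf { ‖(yₙ)‖_p : T(B_X) ⊆ p-co((yₙ)) }`. -/
def kappa (𝕜 : Type*) [RCLike 𝕜] {X Y : Type*}
    [SeminormedAddCommGroup X] [NormedSpace 𝕜 X]
    [NormedAddCommGroup Y] [NormedSpace 𝕜 Y] (p : ℝ≥0∞) (T : X →L[𝕜] Y) : ℝ :=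
  sInf {c : ℝ | ∃ (y : ℕ → Y) (hy : Memℓp y p),
    T '' Metric.closedBall 0 1 ⊆ pCo 𝕜 (conjExp p) y ∧ c = lpNorm p y hy}

/-- `C` is an upper bound for the weak `ℓ_q`-norm of the sequence `(x'ₙ)` of functionals,
i.e. `‖(x'ₙ(x))ₙ‖_q ≤ C‖x‖` for every `x` (equivalently,
`sup_{‖x‖ ≤ 1} ‖(x'ₙ(x))ₙ‖_q ≤ C`). -/
def WeakLpBound (𝕜 : Type*) [RCLike 𝕜] {X : Type*} [SeminormedAddCommGroup X]
    [NormedSpace 𝕜 X] (q : ℝ≥0∞) (x' : ℕ → (X →L[𝕜] 𝕜)) (C : ℝ) : Prop :=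
  ∀ x : X, ∃ h : Memℓp (fun n => x' n x) q, lpNorm q (fun n => x' n x) h ≤ C * ‖x‖

/-- A bounded linear map `T : X → Y` is right `p`-nuclear if `T x = ∑ₙ x'ₙ(x) yₙ` for some
weakly `p'`-summable sequence `(x'ₙ)` in `X'` and some `(yₙ)` with `∑ₙ ‖yₙ‖^p < ∞`. -/
def IsRightPNuclear (𝕜 : Type*) [RCLike 𝕜] {X Y : Type*}
    [SeminormedAddCommGroup X] [NormedSpace 𝕜 X]
    [NormedAddCommGroup Y] [NormedSpace 𝕜 Y] (p : ℝ≥0∞) (T : X →L[𝕜] Y) : Prop :=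
  ∃ (x' : ℕ → (X →L[𝕜] 𝕜)) (y : ℕ → Y) (C : ℝ), 0 ≤ C ∧
    WeakLpBound 𝕜 (conjExp p) x' C ∧ Memℓp y p ∧
    ∀ x : X, HasSum (fun n => x' n x • y n) (T x)

/-- The right `p`-nuclear norm
`ν^p(T) = inf ‖(x'ₙ)‖^w_{p'} ⬝ (∑ₙ ‖yₙ‖^p)^{1/p}` over all representations of `T`. -/
def nuP (𝕜 : Type*) [RCLike 𝕜] {X Y : Type*}
    [SeminormedAddCommGroup X] [NormedSpace 𝕜 X]
    [NormedAddCommGroup Y] [NormedSpace 𝕜 Y] (p : ℝ≥0∞) (T : X →L[𝕜] Y) : ℝ :=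
  sInf {c : ℝ | ∃ (x' : ℕ → (X →L[𝕜] 𝕜)) (y : ℕ → Y) (C : ℝ) (hy : Memℓp y p), 0 ≤ C ∧
    WeakLpBound 𝕜 (conjExp p) x' C ∧
    (∀ x : X, HasSum (fun n => x' n x • y n) (T x)) ∧
    c = C * lpNorm p y hy}

/-!
If `xₙ → 0`, every `∑ αₙ xₙ` with `∑ ‖αₙ‖ ≤ 1` is a limit of convex combinations of points of the
compact set `{c • xₙ : ‖c‖ ≤ 1} ∪ {0}`, and the convex hull of a totally bounded set is totally
bounded; in a Banach space this gives compactness of the closure.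

Conversely, for totally bounded `K ⊆ ball 0 R` take finite `R 4⁻ᵏ`-nets of `K`. The approximations
`aₖ` of `v ∈ K` from these nets, started at `a₀ = 0`, telescope to `v = ∑ₖ 2⁻⁽ᵏ⁺¹⁾ yₖ` with
`yₖ = 2ᵏ⁺¹ (aₖ₊₁ - aₖ)`, and these `yₖ` range over finite sets whose norms are `O(2⁻ᵏ)`.
Enumerating those finite sets one after the other gives the null sequence.
-/

open Filter Topology Set Pointwise Function Metric

def l1Hull (𝕜 : Type*) {ι X : Type*} [NormedField 𝕜] [SeminormedAddCommGroup X] [Module 𝕜 X]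
    (x : ι → X) : Set X :=
  {v | ∃ α : ι → 𝕜, Summable (fun n => ‖α n‖) ∧ (∑' n, ‖α n‖) ≤ 1 ∧
    HasSum (fun n => α n • x n) v}

section l1Hull

variable {𝕜 ι κ X : Type*} [NormedField 𝕜] [SeminormedAddCommGroup X] [Module 𝕜 X]

theorem l1Hull_comp_subset {j : κ → ι} (hj : Injective j) (x : ι → X) :
    l1Hull 𝕜 (x ∘ j) ⊆ l1Hull 𝕜 x := by
  rintro v ⟨α, hα, hα_le, hv⟩
  have hzero {i : ι} (hi : i ∉ range j) : extend j α 0 i = 0 := extend_apply' _ _ _ hi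
  have hnorm : HasSum (fun i => ‖extend j α 0 i‖) (∑' n, ‖α n‖) := by
    refine (hj.hasSum_iff fun i hi => ?_).1 ?_
    · rw [hzero hi, norm_zero]
    · simpa only [comp_def, hj.extend_apply] using hα.hasSum
  refine ⟨extend j α 0, hnorm.summable, hnorm.tsum_eq.trans_le hα_le, ?_⟩
  refine (hj.hasSum_iff fun i hi => ?_).1 ?_
  · rw [hzero hi, zero_smul]
  · simpa only [comp_def, hj.extend_apply] using hv

end l1Hull

theorem mem_l1Hull_of_hasSum_geometric {𝕜 X : Type*} [RCLike 𝕜] [SeminormedAddCommGroup X]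
    [Module 𝕜 X] {y : ℕ → X} {v : X} (hv : HasSum (fun k => (2 : 𝕜)⁻¹ ^ (k + 1) • y k) v) :
    v ∈ l1Hull 𝕜 y := by
  have hnorm : HasSum (fun k => ‖(2 : 𝕜)⁻¹ ^ (k + 1)‖) 1 := by
    convert hasSum_geometric_two' 1 using 2 with k
    rw [norm_pow, norm_inv, RCLike.norm_ofNat, inv_pow, pow_succ]
    field_simp
  exact ⟨_, hnorm.summable, hnorm.tsum_eq.le, hv⟩

theorem Set.Finite.exists_subset_range_finite_support {X : Type*} [Zero X] {s : Set X}
    (hs : s.Finite) :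
    ∃ f : ℕ → X, s ⊆ range f ∧ {j | f j ≠ 0}.Finite ∧ ∀ j, f j ≠ 0 → f j ∈ s := by
  classical
  set l := hs.toFinset.toList
  refine ⟨fun j => l.getD j 0, fun y hy => ?_, (finite_lt_nat l.length).subset fun j hj => ?_,
    fun j hj => ?_⟩
  · obtain ⟨j, hj, rfl⟩ := List.mem_iff_getElem.1 (Finset.mem_toList.2 (hs.mem_toFinset.2 hy))
    exact ⟨j, List.getD_eq_getElem _ _ hj⟩
  · by_contra hlen
    exact hj (List.getD_eq_default _ _ (not_lt.1 hlen))
  · by_cases hlen : j < l.length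
    · simp only [List.getD_eq_getElem _ _ hlen]
      exact hs.mem_toFinset.1 (Finset.mem_toList.1 (List.getElem_mem hlen))
    · exact absurd (List.getD_eq_default _ _ (not_lt.1 hlen)) hj

section NullSequence

variable {X : Type*} [SeminormedAddCommGroup X]

theorem exists_tendsto_cofinite_zero_of_finite {F : ℕ → Set X} {b : ℕ → ℝ}
    (hfin : ∀ k, (F k).Finite) (hb : Tendsto b atTop (𝓝 0)) (hF : ∀ k, F k ⊆ closedBall 0 (b k)) :
    ∃ x : ℕ × ℕ → X, Tendsto x cofinite (𝓝 0) ∧ ∀ k, F k ⊆ range fun j => x (k, j) := by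
  choose f hrange hsupp hmem using fun k => (hfin k).exists_subset_range_finite_support
  refine ⟨fun q => f q.1 q.2, tendsto_nhds.2 fun ε hε => eventually_cofinite.2 ?_, hrange⟩
  have hlarge : {k | ε ≤ b k}.Finite := by
    refine (eventually_cofinite.1 ?_).subset fun k (hk : ε ≤ b k) => not_lt.2 hk
    exact Nat.cofinite_eq_atTop ▸ hb.eventually (gt_mem_nhds hε)
  refine (hlarge.biUnion fun k _ => (hsupp k).image (k, ·)).subset ?_
  rintro ⟨k, j⟩ hq
  have hεf : ε ≤ ‖f k j‖ := by simpa [dist_zero_right] using hq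
  have hne : f k j ≠ 0 := fun h => by simp [h] at hεf; linarith
  have hεb : ε ≤ b k := hεf.trans (mem_closedBall_zero_iff.1 (hF k (hmem k j hne)))
  exact mem_biUnion hεb ⟨j, hne, rfl⟩

theorem hasSum_sub_of_tendsto {a : ℕ → X} {v : X} (ha : Tendsto a atTop (𝓝 v))
    (hs : Summable fun k => ‖a (k + 1) - a k‖) : HasSum (fun k => a (k + 1) - a k) (v - a 0) :=
  (hasSum_iff_tendsto_nat_of_summable_norm hs).2 <| by
    simpa only [Finset.sum_range_sub] using ha.sub_const (a 0)

theorem TotallyBounded.exists_hasSum_mem_finite {K : Set X} (hK : TotallyBounded K) :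
    ∃ R, ∃ D : ℕ → Set X, (∀ k, (D k).Finite) ∧ (∀ k, D k ⊆ closedBall 0 (R * 4⁻¹ ^ k)) ∧
      ∀ v ∈ K, ∃ t : ℕ → X, (∀ k, t k ∈ D k) ∧ HasSum t v := by
  obtain ⟨R, hR, hKR⟩ := hK.isBounded.subset_ball_lt 0 0
  have hr : ∀ k : ℕ, 0 < R * 4⁻¹ ^ k := fun k => by positivity
  choose A hAfin hAcov using fun k => totallyBounded_iff.1 hK _ (hr k)
  refine ⟨2 * R,
    fun k => (insert 0 (A (k + 1)) - insert 0 (A k)) ∩ closedBall 0 (2 * R * 4⁻¹ ^ k),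
    fun k => (((hAfin _).insert 0).sub ((hAfin _).insert 0)).inter_of_left _,
    fun k => inter_subset_right, fun v hv => ?_⟩
  obtain ⟨a, ha0, haA, hav⟩ : ∃ a : ℕ → X, a 0 = 0 ∧ (∀ k, a k ∈ insert 0 (A k)) ∧
      ∀ k, dist (a k) v < R * 4⁻¹ ^ k := by
    have hnear (k : ℕ) : ∃ c ∈ A k, dist c v < R * 4⁻¹ ^ k := by
      obtain ⟨c, hc, hvc⟩ := mem_iUnion₂.1 (hAcov k hv)
      exact ⟨c, hc, dist_comm v c ▸ hvc⟩
    choose c hcA hcv using hnear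
    refine ⟨update c 0 0, update_self .., fun k => ?_, fun k => ?_⟩ <;> rcases k with _ | k
    · simp
    · simpa using mem_insert_of_mem _ (hcA _)
    · rw [update_self, pow_zero, mul_one, dist_comm]
      exact hKR hv
    · simpa using hcv _
  have hstep (k : ℕ) : ‖a (k + 1) - a k‖ ≤ 2 * R * 4⁻¹ ^ k := by
    rw [← dist_eq_norm]
    calc dist (a (k + 1)) (a k) ≤ dist (a (k + 1)) v + dist (a k) v := dist_triangle_right ..
      _ ≤ R * 4⁻¹ ^ k + R * 4⁻¹ ^ k := by
        gcongr
        · exact (hav _).le.trans (mul_le_mul_of_nonneg_left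
            (pow_le_pow_of_le_one (by norm_num) (by norm_num) k.le_succ) hR.le)
        · exact (hav k).le
      _ = 2 * R * 4⁻¹ ^ k := by ring
  refine ⟨fun k => a (k + 1) - a k,
    fun k => ⟨sub_mem_sub (haA _) (haA _), mem_closedBall_zero_iff.2 (hstep k)⟩, ?_⟩
  have hlim : Tendsto a atTop (𝓝 v) := by
    refine tendsto_iff_dist_tendsto_zero.2
      (squeeze_zero (fun _ => dist_nonneg) (fun k => (hav k).le) ?_)
    simpa using (tendsto_pow_atTop_nhds_zero_of_lt_one (by norm_num : (0 : ℝ) ≤ 4⁻¹)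
      (by norm_num)).const_mul R
  have hsum : Summable fun k => ‖a (k + 1) - a k‖ :=
    .of_nonneg_of_le (fun _ => norm_nonneg _) hstep
      ((summable_geometric_of_lt_one (by norm_num) (by norm_num)).mul_left _)
  simpa [ha0] using hasSum_sub_of_tendsto hlim hsum

theorem exists_tendsto_zero_subset_l1Hull_of_finite (𝕜 : Type*) [RCLike 𝕜] [NormedSpace 𝕜 X]
    {D : ℕ → Set X} {R : ℝ} (hfin : ∀ k, (D k).Finite)
    (hD : ∀ k, D k ⊆ closedBall 0 (R * 4⁻¹ ^ k)) :
    ∃ x : ℕ → X, Tendsto x atTop (𝓝 0) ∧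
      {v | ∃ t : ℕ → X, (∀ k, t k ∈ D k) ∧ HasSum t v} ⊆ l1Hull 𝕜 x := by
  have hscaled (k : ℕ) : (2 : 𝕜) ^ (k + 1) • D k ⊆ closedBall 0 (2 * R * 2⁻¹ ^ k) := by
    rintro _ ⟨d, hd, rfl⟩
    rw [mem_closedBall_zero_iff, norm_smul, norm_pow, RCLike.norm_ofNat]
    calc 2 ^ (k + 1) * ‖d‖ ≤ 2 ^ (k + 1) * (R * 4⁻¹ ^ k) := by
          gcongr; exact mem_closedBall_zero_iff.1 (hD k hd)
      _ = 2 * R * 2⁻¹ ^ k := by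
          rw [show (4 : ℝ)⁻¹ = 2⁻¹ * 2⁻¹ by norm_num, mul_pow, pow_succ, inv_pow]
          field_simp
  have hb : Tendsto (fun k : ℕ => 2 * R * 2⁻¹ ^ k) atTop (𝓝 0) := by
    simpa using (tendsto_pow_atTop_nhds_zero_of_lt_one (by norm_num : (0 : ℝ) ≤ 2⁻¹)
      (by norm_num)).const_mul (2 * R)
  obtain ⟨x, hx, hrange⟩ :=
    exists_tendsto_cofinite_zero_of_finite (fun k => (hfin k).smul_set) hb hscaled
  refine ⟨x ∘ Nat.pairEquiv.symm, ?_, ?_⟩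
  · rw [← Nat.cofinite_eq_atTop]
    exact hx.comp Nat.pairEquiv.symm.injective.tendsto_cofinite
  · rintro v ⟨t, htD, hv⟩
    choose J hJ using fun k => hrange k (smul_mem_smul_set (a := (2 : 𝕜) ^ (k + 1)) (htD k))
    have hcoef : HasSum (fun k => (2 : 𝕜)⁻¹ ^ (k + 1) • x (k, J k)) v := by
      simpa [hJ, smul_smul, ← mul_pow] using hv
    have hJinj : Injective fun k => (k, J k) := fun k l h => congrArg Prod.fst h
    have hv' := l1Hull_comp_subset hJinj x (mem_l1Hull_of_hasSum_geometric hcoef)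
    exact l1Hull_comp_subset Nat.pairEquiv.injective (x ∘ Nat.pairEquiv.symm)
      (by rwa [comp_assoc, Equiv.symm_comp_self, comp_id])

theorem TotallyBounded.exists_tendsto_zero_subset_l1Hull (𝕜 : Type*) [RCLike 𝕜]
    [NormedSpace 𝕜 X] {K : Set X} (hK : TotallyBounded K) :
    ∃ x : ℕ → X, Tendsto x atTop (𝓝 0) ∧ K ⊆ l1Hull 𝕜 x := by
  obtain ⟨R, D, hfin, hD, hK⟩ := hK.exists_hasSum_mem_finite
  obtain ⟨x, hx, hsub⟩ := exists_tendsto_zero_subset_l1Hull_of_finite 𝕜 hfin hD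
  exact ⟨x, hx, fun v hv => hsub (hK v hv)⟩

end NullSequence

theorem Convex.sum_smul_mem_of_sum_le_one {R E ι : Type*} [Field R] [LinearOrder R]
    [IsStrictOrderedRing R] [AddCommGroup E] [Module R E] {s : Set E} (hs : Convex R s)
    (h₀ : (0 : E) ∈ s) {t : Finset ι} {w : ι → R} {z : ι → E} (hw₀ : ∀ i ∈ t, 0 ≤ w i)
    (hw₁ : ∑ i ∈ t, w i ≤ 1) (hz : ∀ i ∈ t, z i ∈ s) : ∑ i ∈ t, w i • z i ∈ s := by
  rcases (Finset.sum_nonneg hw₀).eq_or_lt with hW | hW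
  · rw [Finset.sum_eq_zero fun i hi => by
      rw [(Finset.sum_eq_zero_iff_of_nonneg hw₀).1 hW.symm i hi, zero_smul]]
    exact h₀
  · have hcomb : ∑ i ∈ t, (w i / ∑ j ∈ t, w j) • z i ∈ s :=
      hs.sum_mem (fun i hi => div_nonneg (hw₀ i hi) hW.le)
        (by rw [← Finset.sum_div, div_self hW.ne']) hz
    convert hs.smul_mem_of_zero_mem h₀ hcomb ⟨hW.le, hw₁⟩ using 1
    rw [Finset.smul_sum]
    refine Finset.sum_congr rfl fun i _ => ?_
    rw [smul_smul, mul_div_cancel₀ _ hW.ne']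

section Compactness

variable {𝕜 ι X : Type*} [RCLike 𝕜] [NormedAddCommGroup X] [NormedSpace 𝕜 X]
  [NormedSpace ℝ X] [IsScalarTower ℝ 𝕜 X]

theorem sum_smul_mem_convexHull (x : ι → X) {α : ι → 𝕜} {s : Finset ι}
    (hα : ∑ i ∈ s, ‖α i‖ ≤ 1) :
    ∑ i ∈ s, α i • x i ∈ convexHull ℝ (closedBall (0 : 𝕜) 1 • insert 0 (range x)) := by
  have hunit (c : 𝕜) : ‖c / (‖c‖ : 𝕜)‖ ≤ 1 := by
    rw [norm_div, RCLike.norm_ofReal, abs_norm]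
    exact div_self_le_one _
  have hsplit (c : 𝕜) (y : X) : ‖c‖ • (c / (‖c‖ : 𝕜)) • y = c • y := by
    rcases eq_or_ne c 0 with rfl | hc
    · simp
    · rw [RCLike.real_smul_eq_coe_smul (K := 𝕜), smul_smul,
        mul_div_cancel₀ _ (RCLike.ofReal_ne_zero.2 (norm_ne_zero_iff.2 hc))]
  rw [← Finset.sum_congr rfl fun i _ => hsplit (α i) (x i)]
  refine (convex_convexHull ℝ _).sum_smul_mem_of_sum_le_one
    (subset_convexHull ℝ _ <| by
      simpa only [smul_zero] using smul_mem_smul (mem_closedBall_self zero_le_one (x := (0 : 𝕜)))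
        (mem_insert 0 (range x)))
    (fun i _ => norm_nonneg _) hα fun i _ => subset_convexHull ℝ _ ?_
  exact smul_mem_smul (mem_closedBall_zero_iff.2 (hunit _))
    (mem_insert_of_mem _ (mem_range_self i))

theorem l1Hull_subset_closure_convexHull (x : ι → X) :
    l1Hull 𝕜 x ⊆ closure (convexHull ℝ (closedBall (0 : 𝕜) 1 • insert 0 (range x))) := by
  rintro v ⟨α, hα, hα_le, hv⟩
  exact mem_closure_of_tendsto hv (Eventually.of_forall fun s =>
    sum_smul_mem_convexHull x ((hα.sum_le_tsum s fun i _ => norm_nonneg _).trans hα_le))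

theorem isCompact_closure_l1Hull [CompleteSpace X] {x : ι → X}
    (hx : Tendsto x cofinite (𝓝 0)) : IsCompact (closure (l1Hull 𝕜 x)) := by
  have hC : IsCompact (closedBall (0 : 𝕜) 1 • insert 0 (range x)) :=
    (isCompact_closedBall 0 1).smul_set hx.isCompact_insert_range_of_cofinite
  exact (hC.totallyBounded.convexHull.closure.subset
    (closure_minimal (l1Hull_subset_closure_convexHull x) isClosed_closure)).isCompact_of_isClosed
    isClosed_closure

end Compactness

/-- **Grothendieck's compactness criterion.** A subset `K` of a Banach space `X` is relatively
compact if and only if there is a null sequence `(xₙ)` in `X` such that `K` is contained in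
`{ ∑ₙ αₙ xₙ : ∑ₙ |αₙ| ≤ 1 }`. -/
theorem grothendieck_compactness_criterion {𝕜 X : Type*} [RCLike 𝕜]
    [NormedAddCommGroup X] [NormedSpace 𝕜 X] [CompleteSpace X] (K : Set X) :
    IsCompact (closure K) ↔
      ∃ x : ℕ → X, Filter.Tendsto (fun n => ‖x n‖) Filter.atTop (nhds 0) ∧
        K ⊆ {v : X | ∃ α : ℕ → 𝕜, Summable (fun n => ‖α n‖) ∧ (∑' n, ‖α n‖) ≤ 1 ∧
          HasSum (fun n => α n • x n) v} := by
  constructor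
  · intro hK
    obtain ⟨x, hx, hKx⟩ :=
      (hK.totallyBounded.subset subset_closure).exists_tendsto_zero_subset_l1Hull 𝕜
    exact ⟨x, tendsto_zero_iff_norm_tendsto_zero.1 hx, hKx⟩
  · rintro ⟨x, hx, hKx⟩
    let : NormedSpace ℝ X := NormedSpace.restrictScalars ℝ 𝕜 X
    have hx₀ : Tendsto x cofinite (𝓝 0) :=
      Nat.cofinite_eq_atTop ▸ tendsto_zero_iff_norm_tendsto_zero.2 hx
    exact (isCompact_closure_l1Hull hx₀).of_isClosed_subset isClosed_closure (closure_mono hKx)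
end
end

section
/- For every 1 ≤ p < ∞ and every sequence (xₙ)ₙ in a Banach space X with ∑ₙ ‖xₙ‖^p < ∞, the p-convex hull p-co((xₙ)) = { ∑ₙ αₙ xₙ : (αₙ) ∈ ℓ_{p'}, ‖(αₙ)‖_{ℓ_{p'}} ≤ 1 } is a compact subset of X. -/
noncomputable section

open scoped ENNReal NNReal

/-! The closed unit ball of `ℓ_{p'}` is compact for the topology of pointwise convergence: it is
closed in the product of closed discs, since the `ℓ_{p'}`-norm is lower semicontinuous for
pointwise limits. On this ball `α ↦ ∑ₙ αₙ xₙ` is the uniform limit of its (continuous) partial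
sums, because by Hölder the error is at most `‖(xₙ)_{n ∉ s}‖_p`, which tends to `0` as `p < ∞`.
Hence `p-co((xₙ))` is a continuous image of a compact set. -/

open Filter Topology

theorem holderConjugate_conjExp {p : ℝ≥0∞} (hp : 1 ≤ p) : (conjExp p).HolderConjugate p := by
  rw [ENNReal.holderConjugate_iff, conjExp, one_div, inv_inv, add_comm]
  exact add_tsub_cancel_of_le (ENNReal.inv_le_one.mpr hp)

namespace lp

section Compact

variable {ι : Type*} {E : ι → Type*} [∀ i, NormedAddCommGroup (E i)] {q : ℝ≥0∞} [Fact (1 ≤ q)]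

theorem isClosed_coe_closedBall (r : ℝ) :
    IsClosed ((⇑) '' Metric.closedBall (0 : lp E q) r : Set (∀ i, E i)) := by
  set B := Metric.closedBall (0 : lp E q) r
  let g : B → ∀ i, E i := fun a => ⇑(a : lp E q)
  have hg : (⇑) '' B = Set.range g := Set.image_eq_range _ _
  refine isClosed_of_closure_subset fun f hf => ?_
  rw [hg, mem_closure_iff_nhds] at hf
  have : (comap g (𝓝 f)).NeBot := comap_neBot_iff.mpr fun t ht => by
    obtain ⟨_, hft, a, rfl⟩ := hf t ht
    exact ⟨a, hft⟩
  have hbdd : Bornology.IsBounded (Set.range ((↑) : B → lp E q)) :=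
    Metric.isBounded_closedBall.subset Subtype.range_coe.subset
  have hlim : Tendsto g (comap g (𝓝 f)) (𝓝 f) := tendsto_comap
  refine ⟨⟨f, memℓp_of_tendsto hbdd hlim⟩, mem_closedBall_zero_iff.mpr ?_, rfl⟩
  exact norm_le_of_tendsto (Eventually.of_forall fun a : B => mem_closedBall_zero_iff.mp a.2) hlim

theorem isCompact_coe_closedBall [∀ i, ProperSpace (E i)] (r : ℝ) :
    IsCompact ((⇑) '' Metric.closedBall (0 : lp E q) r : Set (∀ i, E i)) := by
  refine (isCompact_univ_pi fun i => isCompact_closedBall (0 : E i) r).of_isClosed_subset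
    (isClosed_coe_closedBall r) ?_
  rintro _ ⟨α, hα, rfl⟩ i -
  exact mem_closedBall_zero_iff.mpr <|
    (norm_apply_le_norm (zero_lt_one.trans_le Fact.out).ne' α i).trans
      (mem_closedBall_zero_iff.mp hα)

end Compact

section SmulPairing

variable {ι 𝕜 X : Type*} [RCLike 𝕜] [NormedAddCommGroup X] [NormedSpace 𝕜 X] [CompleteSpace X]
  {p q : ℝ≥0∞} [Fact (1 ≤ p)] [Fact (1 ≤ q)] [q.HolderConjugate p]

variable (𝕜 X p q) in
def smulPairing : lp (fun _ : ι => 𝕜) q →L[𝕜] lp (fun _ : ι => X) p →L[𝕜] X :=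
  dualPairing q p (fun _ => ContinuousLinearMap.lsmul 𝕜 𝕜) (K := 1)
    fun _ => ContinuousLinearMap.opNorm_lsmul_le

theorem smulPairing_apply (α : lp (fun _ : ι => 𝕜) q) (y : lp (fun _ : ι => X) p) :
    smulPairing 𝕜 X p q α y = ∑' i, α i • y i :=
  rfl

theorem hasSum_smulPairing (α : lp (fun _ : ι => 𝕜) q) (y : lp (fun _ : ι => X) p) :
    HasSum (fun i => α i • y i) (smulPairing 𝕜 X p q α y) := by
  let f : lp (fun _ : ι => X) 1 := holderL 1 (fun _ => ContinuousLinearMap.lsmul 𝕜 𝕜) (K := 1)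
    (fun _ => ContinuousLinearMap.opNorm_lsmul_le) α y
  have hf : Summable fun i => f i := .of_norm (by simpa using f.2.summable)
  exact hf.hasSum

theorem norm_smulPairing_le (α : lp (fun _ : ι => 𝕜) q) (y : lp (fun _ : ι => X) p) :
    ‖smulPairing 𝕜 X p q α y‖ ≤ ‖α‖ * ‖y‖ := by
  have hnorm : ‖smulPairing 𝕜 X p q (ι := ι)‖ ≤ 1 := norm_dualPairing _ _
  calc ‖smulPairing 𝕜 X p q α y‖ ≤ ‖smulPairing 𝕜 X p q‖ * ‖α‖ * ‖y‖ :=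
        (smulPairing 𝕜 X p q).le_opNorm₂ α y
    _ ≤ 1 * ‖α‖ * ‖y‖ := by gcongr
    _ = ‖α‖ * ‖y‖ := by rw [one_mul]

theorem smulPairing_single [DecidableEq ι] (α : lp (fun _ : ι => 𝕜) q) (i : ι) (v : X) :
    smulPairing 𝕜 X p q α (lp.single p i v) = α i • v := by
  rw [smulPairing_apply, tsum_eq_single i]
  · simp
  · intro j hj
    simp [hj]

theorem continuousOn_tsum_smul_coe_closedBall (hp : p ≠ ∞) (y : lp (fun _ : ι => X) p)
    (r : ℝ) :
    ContinuousOn (fun f : ι → 𝕜 => ∑' i, f i • y i)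
      ((⇑) '' Metric.closedBall (0 : lp (fun _ : ι => 𝕜) q) r) := by
  classical
  refine TendstoUniformlyOn.continuousOn (p := atTop)
    (F := fun (s : Finset ι) (f : ι → 𝕜) => ∑ i ∈ s, f i • y i) ?_
    (Frequently.of_forall fun s => Continuous.continuousOn (by fun_prop))
  rw [Metric.tendstoUniformlyOn_iff]
  intro ε hε
  have htail :
      Tendsto (fun s : Finset ι => r * ‖∑ i ∈ s, lp.single p i (y i) - y‖) atTop (𝓝 0) := by
    simpa using (tendsto_iff_norm_sub_tendsto_zero.mp (lp.hasSum_single hp y)).const_mul r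
  filter_upwards [htail.eventually (gt_mem_nhds hε)] with s hs
  rintro _ ⟨α, hα, rfl⟩
  have hsum : ∑ i ∈ s, α i • y i = smulPairing 𝕜 X p q α (∑ i ∈ s, lp.single p i (y i)) := by
    simp [map_sum, smulPairing_single]
  calc dist (∑' i, α i • y i) (∑ i ∈ s, α i • y i)
      = ‖smulPairing 𝕜 X p q α (∑ i ∈ s, lp.single p i (y i) - y)‖ := by
        rw [dist_eq_norm', hsum, ← smulPairing_apply, map_sub]
    _ ≤ ‖α‖ * ‖∑ i ∈ s, lp.single p i (y i) - y‖ := norm_smulPairing_le _ _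
    _ ≤ r * ‖∑ i ∈ s, lp.single p i (y i) - y‖ := by
        gcongr
        exact mem_closedBall_zero_iff.mp hα
    _ < ε := hs

end SmulPairing

end lp

theorem pCo_eq_image_coe_closedBall {𝕜 X : Type*} [RCLike 𝕜] [NormedAddCommGroup X]
    [NormedSpace 𝕜 X] [CompleteSpace X] {p q : ℝ≥0∞} [Fact (1 ≤ p)] [Fact (1 ≤ q)]
    [q.HolderConjugate p] (x : lp (fun _ : ℕ => X) p) :
    pCo 𝕜 q x = (fun f : ℕ → 𝕜 => ∑' n, f n • x n) ''
      ((⇑) '' Metric.closedBall (0 : lp (fun _ : ℕ => 𝕜) q) 1) := by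
  ext v
  constructor
  · rintro ⟨α, hα, hv⟩
    exact ⟨α, ⟨α, mem_closedBall_zero_iff.mpr hα, rfl⟩, hv.tsum_eq⟩
  · rintro ⟨_, ⟨α, hα, rfl⟩, rfl⟩
    exact ⟨α, mem_closedBall_zero_iff.mp hα, lp.hasSum_smulPairing α x⟩

/-- For `1 ≤ p < ∞` and a sequence `(xₙ)` in a Banach space `X` with `∑ₙ ‖xₙ‖^p < ∞`,
the `p`-convex hull `{ ∑ₙ αₙ xₙ : ‖(αₙ)‖_{ℓ_{p'}} ≤ 1 }` is a compact subset of `X`. -/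
theorem isCompact_pCo {𝕜 X : Type*} [RCLike 𝕜]
    [NormedAddCommGroup X] [NormedSpace 𝕜 X] [CompleteSpace X]
    (p : ℝ≥0∞) (hp1 : 1 ≤ p) (hp : p ≠ ∞) (x : ℕ → X) (hx : Memℓp x p) :
    IsCompact (pCo 𝕜 (conjExp p) x) := by
  have : Fact (1 ≤ p) := ⟨hp1⟩
  have := holderConjugate_conjExp hp1
  rw [pCo_eq_image_coe_closedBall (⟨x, hx⟩ : lp (fun _ : ℕ => X) p)]
  exact (lp.isCompact_coe_closedBall 1).image_of_continuousOn
    (lp.continuousOn_tsum_smul_coe_closedBall hp _ 1)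
end
end

section
/- Let 1 ≤ p < ∞, let X, Y, Z be Banach spaces, let Θ : Z → Y be right p-nuclear, let π : Z → Z/ker Θ be the quotient map and Θ̃ : Z/ker Θ → Y the induced map with Θ̃ ∘ π = Θ. If R : X → Z/ker Θ is a bounded linear map with ‖R‖ ≤ 1 and T = Θ̃ ∘ R, then T is p-compact and κ_p(T) ≤ ν^p(Θ). -/
noncomputable section

open scoped ENNReal NNReal

/-!
Fix a representation `Θ z = ∑ₙ z'ₙ(z) yₙ` with weak `ℓ_{p'}`-bound `C`, and `D > C`. Since
`‖R x‖ ≤ 1`, the quotient norm lets us lift `R x` to some `z` with `C‖z‖ ≤ D`, so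
`T x = Θ z = ∑ₙ (z'ₙ(z)/D) (D yₙ)` with `‖(z'ₙ(z)/D)ₙ‖_{p'} ≤ 1`. Hence `T(B_X)` lies in the
`p`-convex hull of `(D yₙ)`, giving `κ_p(T) ≤ D ‖(yₙ)‖_p`; letting `D ↓ C` and taking the
infimum over representations gives `κ_p(T) ≤ ν^p(Θ)`.
-/

open scoped ENNReal NNReal Topology
open Filter Metric

section

variable {𝕜 X Y Z : Type*} [RCLike 𝕜] [NormedAddCommGroup Y] [NormedSpace 𝕜 Y]

theorem lpNorm_const_smul {p : ℝ≥0∞} (hp : p ≠ 0) (c : 𝕜) {y : ℕ → Y} (hy : Memℓp y p) :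
    lpNorm p (fun n => c • y n) (hy.const_smul c) = ‖c‖ * lpNorm p y hy :=
  lp.norm_const_smul hp (⟨y, hy⟩ : lp (fun _ : ℕ => Y) p)

theorem mem_pCo_ofReal_smul {q : ℝ≥0∞} [Fact (1 ≤ q)] {y : ℕ → Y}
    {a : lp (fun _ : ℕ => 𝕜) q} {D : ℝ} (hD : 0 < D) (ha : ‖a‖ ≤ D) {v : Y}
    (hv : HasSum (fun n => a n • y n) v) :
    v ∈ pCo 𝕜 q (fun n => (D : 𝕜) • y n) := by
  have hD𝕜 : (D : 𝕜) ≠ 0 := RCLike.ofReal_ne_zero.mpr hD.ne'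
  refine ⟨(D : 𝕜)⁻¹ • a, ?_, ?_⟩
  · rw [norm_smul, norm_inv, RCLike.norm_ofReal, abs_of_pos hD]
    exact inv_mul_le_one_of_le₀ ha hD.le
  · convert hv using 2 with n
    rw [lp.coeFn_smul, Pi.smul_apply, smul_smul, smul_eq_mul, mul_comm, ← mul_assoc,
      mul_inv_cancel₀ hD𝕜, one_mul]

theorem mem_pCo_of_hasSum_of_weakLpBound [SeminormedAddCommGroup Z] [NormedSpace 𝕜 Z]
    {q : ℝ≥0∞} [Fact (1 ≤ q)] {z' : ℕ → Z →L[𝕜] 𝕜} {y : ℕ → Y} {C D : ℝ}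
    (hW : WeakLpBound 𝕜 q z' C) (hD : 0 < D) {z : Z} (hz : C * ‖z‖ ≤ D) {v : Y}
    (hv : HasSum (fun n => z' n z • y n) v) :
    v ∈ pCo 𝕜 q (fun n => (D : 𝕜) • y n) := by
  obtain ⟨hmem, hnorm⟩ := hW z
  exact mem_pCo_ofReal_smul (a := ⟨fun n => z' n z, hmem⟩) hD (hnorm.trans hz) hv

theorem Submodule.Quotient.exists_mk_eq_mul_norm_le [SeminormedAddCommGroup Z]
    [NormedSpace 𝕜 Z] {S : Submodule 𝕜 Z} {w : Z ⧸ S} (hw : ‖w‖ ≤ 1) {C D : ℝ} (hC : 0 ≤ C)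
    (hCD : C < D) : ∃ z : Z, Submodule.Quotient.mk z = w ∧ C * ‖z‖ ≤ D := by
  set ε := (D - C) / (C + 1)
  have hε : 0 < ε := div_pos (by linarith) (by linarith)
  have hCε : C * ε ≤ D - C := by
    rw [mul_div_assoc', div_le_iff₀ (by linarith)]
    nlinarith
  obtain ⟨z, rfl, hz⟩ := Submodule.Quotient.norm_mk_lt w hε
  refine ⟨z, rfl, ?_⟩
  nlinarith [mul_le_mul_of_nonneg_left (hz.le.trans (add_le_add_left hw ε)) hC]

theorem image_closedBall_subset_pCo_of_quotient [SeminormedAddCommGroup X] [NormedSpace 𝕜 X]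
    [SeminormedAddCommGroup Z] [NormedSpace 𝕜 Z] {S : Submodule 𝕜 Z} {U : Z ⧸ S →L[𝕜] Y}
    {R : X →L[𝕜] Z ⧸ S} (hR : ‖R‖ ≤ 1) {q : ℝ≥0∞} [Fact (1 ≤ q)] {z' : ℕ → Z →L[𝕜] 𝕜}
    {y : ℕ → Y} {C D : ℝ} (hC : 0 ≤ C) (hW : WeakLpBound 𝕜 q z' C)
    (hrep : ∀ z, HasSum (fun n => z' n z • y n) (U (Submodule.Quotient.mk z))) (hCD : C < D) :
    U.comp R '' closedBall 0 1 ⊆ pCo 𝕜 q (fun n => (D : 𝕜) • y n) := by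
  rintro _ ⟨x, hx, rfl⟩
  have hRx : ‖R x‖ ≤ 1 :=
    R.le_of_opNorm_le hR x |>.trans (by simpa using mem_closedBall_zero_iff.mp hx)
  obtain ⟨z, hzx, hz⟩ := Submodule.Quotient.exists_mk_eq_mul_norm_le hRx hC hCD
  rw [ContinuousLinearMap.comp_apply, ← hzx]
  exact mem_pCo_of_hasSum_of_weakLpBound hW (hC.trans_lt hCD) hz (hrep z)

variable [SeminormedAddCommGroup X] [NormedSpace 𝕜 X] {p : ℝ≥0∞} {T : X →L[𝕜] Y} {y : ℕ → Y}

theorem kappa_le_lpNorm (hy : Memℓp y p)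
    (hT : T '' closedBall 0 1 ⊆ pCo 𝕜 (conjExp p) y) : kappa 𝕜 p T ≤ lpNorm p y hy :=
  csInf_le ⟨0, by rintro _ ⟨y, hy, -, rfl⟩; exact lp.norm_nonneg' _⟩ ⟨y, hy, hT, rfl⟩

theorem kappa_le_mul_lpNorm (hp : p ≠ 0) {C : ℝ} (hC : 0 ≤ C) (hy : Memℓp y p)
    (hT : ∀ D : ℝ, C < D → T '' closedBall 0 1 ⊆ pCo 𝕜 (conjExp p) (fun n => (D : 𝕜) • y n)) :
    kappa 𝕜 p T ≤ C * lpNorm p y hy := by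
  have hlim : Tendsto (fun D : ℝ => ‖(D : 𝕜)‖ * lpNorm p y hy) (𝓝[>] C)
      (𝓝 (‖(C : 𝕜)‖ * lpNorm p y hy)) :=
    (Continuous.tendsto (by fun_prop) C).mono_left nhdsWithin_le_nhds
  rw [RCLike.norm_ofReal, abs_of_nonneg hC] at hlim
  refine ge_of_tendsto hlim (eventually_nhdsWithin_of_forall fun D hD => ?_)
  rw [← lpNorm_const_smul hp]
  exact kappa_le_lpNorm _ (hT D hD)

end

theorem isPCompact_of_factorization_general {𝕜 X Y Z : Type*} [RCLike 𝕜]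
    [NormedAddCommGroup X] [NormedSpace 𝕜 X]
    [NormedAddCommGroup Y] [NormedSpace 𝕜 Y]
    [NormedAddCommGroup Z] [NormedSpace 𝕜 Z]
    (p : ℝ≥0∞) (hp1 : 1 ≤ p)
    (Θ : Z →L[𝕜] Y) (hΘ : IsRightPNuclear 𝕜 p Θ)
    (Θt : (Z ⧸ LinearMap.ker (Θ : Z →ₗ[𝕜] Y)) →L[𝕜] Y)
    (hΘt : ∀ z : Z, Θt (Submodule.Quotient.mk z) = Θ z)
    (R : X →L[𝕜] Z ⧸ LinearMap.ker (Θ : Z →ₗ[𝕜] Y)) (hR : ‖R‖ ≤ 1)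
    (T : X →L[𝕜] Y) (hT : T = Θt.comp R) :
    IsPCompact 𝕜 p T ∧ kappa 𝕜 p T ≤ nuP 𝕜 p Θ := by
  subst hT
  have hcover : ∀ (z' : ℕ → Z →L[𝕜] 𝕜) (y : ℕ → Y) (C : ℝ), 0 ≤ C →
      WeakLpBound 𝕜 (conjExp p) z' C → (∀ z, HasSum (fun n => z' n z • y n) (Θ z)) →
      ∀ D : ℝ, C < D →
        Θt.comp R '' closedBall 0 1 ⊆ pCo 𝕜 (conjExp p) (fun n => (D : 𝕜) • y n) :=
    fun _ _ _ hC hW hrep _ hCD =>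
      image_closedBall_subset_pCo_of_quotient hR hC hW (fun z => (hΘt z).symm ▸ hrep z) hCD
  obtain ⟨z', y, C, hC, hW, hy, hrep⟩ := hΘ
  refine ⟨⟨_, hy.const_smul _, hcover z' y C hC hW hrep (C + 1) (lt_add_one C)⟩, ?_⟩
  refine le_csInf ⟨_, z', y, C, hy, hC, hW, hrep, rfl⟩ ?_
  rintro _ ⟨z', y, C, hy, hC, hW, hrep, rfl⟩
  exact kappa_le_mul_lpNorm (zero_lt_one.trans_le hp1).ne' hC hy (hcover z' y C hC hW hrep)

/-- If `Θ : Z → Y` is right `p`-nuclear, `Θ̃ : Z/ker Θ → Y` is the induced map on the quotient,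
and `R : X → Z/ker Θ` is a bounded linear map with `‖R‖ ≤ 1`, then `T = Θ̃ ∘ R` is `p`-compact
with `κ_p(T) ≤ ν^p(Θ)`. -/
theorem isPCompact_of_factorization {𝕜 X Y Z : Type*} [RCLike 𝕜]
    [NormedAddCommGroup X] [NormedSpace 𝕜 X] [CompleteSpace X]
    [NormedAddCommGroup Y] [NormedSpace 𝕜 Y] [CompleteSpace Y]
    [NormedAddCommGroup Z] [NormedSpace 𝕜 Z] [CompleteSpace Z]
    (p : ℝ≥0∞) (hp1 : 1 ≤ p) (hp : p ≠ ∞)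
    (Θ : Z →L[𝕜] Y) (hΘ : IsRightPNuclear 𝕜 p Θ)
    (Θt : (Z ⧸ LinearMap.ker (Θ : Z →ₗ[𝕜] Y)) →L[𝕜] Y)
    (hΘt : ∀ z : Z, Θt (Submodule.Quotient.mk z) = Θ z)
    (R : X →L[𝕜] Z ⧸ LinearMap.ker (Θ : Z →ₗ[𝕜] Y)) (hR : ‖R‖ ≤ 1)
    (T : X →L[𝕜] Y) (hT : T = Θt.comp R) :
    IsPCompact 𝕜 p T ∧ kappa 𝕜 p T ≤ nuP 𝕜 p Θ :=
  isPCompact_of_factorization_general p hp1 Θ hΘ Θt hΘt R hR T hT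
end
end
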